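/- arXiv:math/0209283 — 3 statements merged into one kernel-verified Lean document; each statement's English description precedes it below -/
import Mathlib

section
/- Let K be a commutative ring and let K[[t]] be the ring of formal power series in a variable t over K. For an integer j define the operator ∇_j on K[[t]] by ∇_j f = t·(df/dt) − j·f. Then for every integer i ≥ 1 and every f ∈ K[[t]], one has (∇_{i−1} ∘ ∇_{i−2} ∘ ⋯ ∘ ∇_1)(f) − (−1)^{i−1}·(i−1)!·f(0) ∈ t^i·K[[t]], where f(0) denotes the constant coefficient of f and, for i = 1, the composite is understood to be the identity map. -/
open PowerSeries

/-- The operator `∇_j f = t·(df/dt) − j·f` on `K⟦t⟧`, for an integer `j`. -/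
noncomputable def nablaT (K : Type*) [CommRing K] (j : ℤ) (f : K⟦X⟧) : K⟦X⟧ :=
  PowerSeries.X * f.derivativeFun - j • f

/-- The composite `∇_k ∘ ∇_{k−1} ∘ ⋯ ∘ ∇_1` (with `∇_1` applied first); for `k = 0` it is the
identity map. -/
noncomputable def nablaTComp (K : Type*) [CommRing K] : ℕ → K⟦X⟧ → K⟦X⟧
  | 0, f => f
  | k + 1, f => nablaT K (k + 1) (nablaTComp K k f)

/-!
Each `∇_j` acts diagonally on monomials, `∇_j tⁿ = (n − j) tⁿ`, so the composite multiplies the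
`n`-th coefficient by `∏_{j=1}^{k} (n − j)`. This product vanishes for `1 ≤ n ≤ k` and equals
`(−1)ᵏ k!` for `n = 0`.
-/

namespace PowerSeries

theorem coeff_X_mul_derivative {R : Type*} [CommSemiring R] (f : R⟦X⟧) (n : ℕ) :
    coeff n (X * d⁄dX R f) = n * coeff n f := by
  cases n with
  | zero => simp
  | succ m =>
    rw [coeff_succ_X_mul, coeff_derivative, mul_comm, Nat.cast_succ]

end PowerSeries

section

variable {K : Type*} [CommRing K]

theorem coeff_nablaT (j : ℤ) (f : K⟦X⟧) (n : ℕ) :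
    coeff n (nablaT K j f) = ((n : K) - j) * coeff n f := by
  rw [nablaT, map_sub, show f.derivativeFun = d⁄dX K f from rfl, coeff_X_mul_derivative,
    map_zsmul, zsmul_eq_mul, sub_mul]

theorem coeff_nablaTComp (k : ℕ) (f : K⟦X⟧) (n : ℕ) :
    coeff n (nablaTComp K k f) = (∏ j ∈ Finset.range k, ((n : K) - (j + 1))) * coeff n f := by
  induction k with
  | zero => simp [nablaTComp]
  | succ k ih =>
    rw [nablaTComp, coeff_nablaT, ih, Finset.prod_range_succ]
    push_cast
    ring

theorem constantCoeff_nablaTComp (k : ℕ) (f : K⟦X⟧) :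
    constantCoeff (nablaTComp K k f) = (-1) ^ k * k.factorial * constantCoeff f := by
  rw [← coeff_zero_eq_constantCoeff_apply, coeff_nablaTComp, Nat.cast_zero]
  simp_rw [zero_sub, Finset.prod_neg, Finset.card_range]
  rw [← Finset.prod_range_add_one_eq_factorial]
  push_cast
  rw [coeff_zero_eq_constantCoeff_apply]

theorem coeff_nablaTComp_eq_zero {k n : ℕ} (hn₀ : 0 < n) (hnk : n ≤ k) (f : K⟦X⟧) :
    coeff n (nablaTComp K k f) = 0 := by
  have hfactor : ((n : K) - ((n - 1 : ℕ) + 1)) = 0 := by push_cast [hn₀]; ring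
  rw [coeff_nablaTComp, Finset.prod_eq_zero (Finset.mem_range.2 (by omega)) hfactor, zero_mul]

end

theorem stmt3_general (K : Type*) [CommRing K] (i : ℕ) (f : K⟦X⟧) :
    ∃ g : K⟦X⟧,
      nablaTComp K (i - 1) f -
          ((-1 : K) ^ (i - 1) * (i - 1).factorial) •
            PowerSeries.C (PowerSeries.constantCoeff f) =
        PowerSeries.X ^ i * g := by
  refine X_pow_dvd_iff.2 fun n hn => ?_
  rw [map_sub, map_smul, coeff_C, smul_eq_mul]
  rcases Nat.eq_zero_or_pos n with rfl | hn₀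
  · rw [coeff_zero_eq_constantCoeff_apply, constantCoeff_nablaTComp, if_pos rfl, sub_self]
  · rw [coeff_nablaTComp_eq_zero hn₀ (by omega), if_neg hn₀.ne', mul_zero, sub_zero]

/-- Let `K` be a commutative ring, `∇_j f = t·(df/dt) − j·f` on `K⟦t⟧`.
For every `i ≥ 1` and every `f ∈ K⟦t⟧`,
`(∇_{i−1} ∘ ⋯ ∘ ∇_1)(f) − (−1)^{i−1}·(i−1)!·f(0) ∈ tⁱ·K⟦t⟧`
(where for `i = 1` the composite is the identity and `f(0)` is the constant coefficient). -/
theorem stmt3 (K : Type*) [CommRing K] (i : ℕ) (hi : 1 ≤ i) (f : K⟦X⟧) :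
    ∃ g : K⟦X⟧,
      nablaTComp K (i - 1) f -
          ((-1 : K) ^ (i - 1) * (i - 1).factorial) •
            PowerSeries.C (PowerSeries.constantCoeff f) =
        PowerSeries.X ^ i * g :=
  stmt3_general K i f
end

section
/- Let p be a prime number and let k be an algebraically closed field of characteristic p. Then the map x ↦ F(x) − x from the ring W(k) of p-typical Witt vectors over k to itself is surjective, where F denotes the Witt vector Frobenius. -/
open WittVector Polynomial

noncomputable section Stmt7Aux

variable {p : ℕ} [hp : Fact p.Prime]

lemma stmt7_iter_versch_coeff_lt {R : Type*} [CommRing R] (n : ℕ) (x : WittVector p R)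
    {i : ℕ} (hi : i < n) : ((WittVector.verschiebung (p := p))^[n] x).coeff i = 0 := by
  induction n generalizing i with
  | zero => omega
  | succ n ih =>
    rw [Function.iterate_succ_apply']
    cases i with
    | zero => exact WittVector.verschiebung_coeff_zero _
    | succ i =>
      rw [WittVector.verschiebung_coeff_succ]
      exact ih (by omega)

lemma stmt7_init_coeff {R : Type*} [CommRing R] (n : ℕ) (x : WittVector p R)
    (i : ℕ) : (WittVector.init n x).coeff i = if i < n then x.coeff i else 0 := by
  by_cases h : i < n <;>
    simp [WittVector.init, WittVector.select, WittVector.coeff_mk, h]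

lemma stmt7_init_frobenius {R : Type*} [CommRing R] [CharP R p] (n : ℕ) (x : WittVector p R) :
    WittVector.init n (WittVector.frobenius x) =
      WittVector.frobenius (WittVector.init n x) := by
  ext i
  simp only [stmt7_init_coeff, WittVector.coeff_frobenius_charP]
  split_ifs with hi
  · rfl
  · rw [zero_pow hp.out.ne_zero]

lemma stmt7_g_init_congr {R : Type*} [CommRing R] [CharP R p] {n : ℕ} {x x' : WittVector p R}
    (h : WittVector.init n x = WittVector.init n x') :
    WittVector.init n (WittVector.frobenius x - x) =
      WittVector.init n (WittVector.frobenius x' - x') := by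
  rw [WittVector.init_sub, stmt7_init_frobenius, h, ← stmt7_init_frobenius,
    ← WittVector.init_sub]

lemma stmt7_add_iter_versch_coeff {R : Type*} [CommRing R] (u w : WittVector p R) (m i : ℕ)
    (hi : i < m) :
    (u + (WittVector.verschiebung (p := p))^[m] w).coeff i = u.coeff i := by
  have h0 : WittVector.init m ((WittVector.verschiebung (p := p))^[m] w) = 0 := by
    ext j
    rw [stmt7_init_coeff]
    split_ifs with hj
    · simp [stmt7_iter_versch_coeff_lt m w hj]
    · simp
  have h := WittVector.init_add u ((WittVector.verschiebung (p := p))^[m] w) m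
  rw [h0, add_zero, WittVector.init_init] at h
  have h2 := congrArg (fun z : WittVector p R => z.coeff i) h
  simpa [stmt7_init_coeff, hi] using h2

lemma stmt7_root (p : ℕ) [Fact p.Prime] (k : Type*) [Field k] [IsAlgClosed k] (c : k) :
    ∃ t : k, t ^ p - t + c = 0 := by
  have hp1 : (1 : WithBot ℕ) < (p : WithBot ℕ) := by
    exact_mod_cast (Fact.out : p.Prime).one_lt
  have h2 : (C c - X : k[X]).degree ≤ 1 :=
    le_trans (Polynomial.degree_sub_le _ _)
      (max_le (Polynomial.degree_C_le.trans zero_le_one) (le_of_eq Polynomial.degree_X))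
  have hlt : (C c - X : k[X]).degree < ((X : k[X]) ^ p).degree := by
    rw [Polynomial.degree_X_pow]
    exact lt_of_le_of_lt h2 hp1
  have h1 : ((X : k[X]) ^ p - X + C c) = X ^ p + (C c - X) := by ring
  have hdeg : ((X : k[X]) ^ p - X + C c).degree = (p : WithBot ℕ) := by
    rw [h1, Polynomial.degree_add_eq_left_of_degree_lt hlt, Polynomial.degree_X_pow]
  obtain ⟨t, ht⟩ := IsAlgClosed.exists_root ((X : k[X]) ^ p - X + C c)
    (by rw [hdeg]; exact_mod_cast (Fact.out : p.Prime).ne_zero)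
  refine ⟨t, ?_⟩
  simpa [Polynomial.IsRoot, Polynomial.eval_pow] using ht

variable (p) in
/-- Recursive sequence of approximate solutions to `F x - x = y`. -/
def stmt7Seq (k : Type*) [Field k] [IsAlgClosed k] [CharP k p] (y : WittVector p k) :
    ℕ → WittVector p k
  | 0 => 0
  | n + 1 =>
    stmt7Seq k y n +
      (WittVector.verschiebung (p := p))^[n]
        (WittVector.teichmuller p
          (Classical.choose (stmt7_root p k
            (((WittVector.frobenius (stmt7Seq k y n) - stmt7Seq k y n - y).shift n).coeff 0))))

lemma stmt7_invariant (k : Type*) [Field k] [IsAlgClosed k] [CharP k p] (y : WittVector p k) :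
    ∀ n, ∀ i < n,
      (WittVector.frobenius (stmt7Seq p k y n) - stmt7Seq p k y n - y).coeff i = 0 := by
  intro n
  induction n with
  | zero => omega
  | succ n ih =>
    intro i hi
    set a := stmt7Seq p k y n with ha
    set e := WittVector.frobenius a - a - y with he
    set c := (e.shift n).coeff 0 with hc
    set t := Classical.choose (stmt7_root p k c) with htdef
    have ht : t ^ p - t + c = 0 := Classical.choose_spec (stmt7_root p k c)
    have hseq : stmt7Seq p k y (n + 1) =
        a + (WittVector.verschiebung (p := p))^[n] (WittVector.teichmuller p t) := rfl
    have he_eq : e = (WittVector.verschiebung (p := p))^[n] (e.shift n) :=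
      WittVector.eq_iterate_verschiebung ih
    have hFV : ∀ u : WittVector p k,
        WittVector.frobenius ((WittVector.verschiebung (p := p))^[n] u) =
          (WittVector.verschiebung (p := p))^[n] (WittVector.frobenius u) := by
      intro u
      exact ((WittVector.verschiebung_frobenius_comm (p := p) (R := k)).iterate_left n u).symm
    have key : WittVector.frobenius (stmt7Seq p k y (n + 1)) - stmt7Seq p k y (n + 1) - y =
        (WittVector.verschiebung (p := p))^[n]
          (e.shift n +
            (WittVector.frobenius (WittVector.teichmuller p t) - WittVector.teichmuller p t)) := by
      have hsub : (⇑(WittVector.verschiebung (p := p) (R := k)))^[n]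
            (WittVector.frobenius (WittVector.teichmuller p t) - WittVector.teichmuller p t) =
          (⇑(WittVector.verschiebung (p := p) (R := k)))^[n]
            (WittVector.frobenius (WittVector.teichmuller p t)) -
          (⇑(WittVector.verschiebung (p := p) (R := k)))^[n] (WittVector.teichmuller p t) :=
        iterate_map_sub (WittVector.verschiebung : WittVector p k →+ WittVector p k) n _ _
      have hadd : (⇑(WittVector.verschiebung (p := p) (R := k)))^[n]
            (e.shift n + (WittVector.frobenius (WittVector.teichmuller p t)
              - WittVector.teichmuller p t)) =
          (⇑(WittVector.verschiebung (p := p) (R := k)))^[n] (e.shift n) +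
          (⇑(WittVector.verschiebung (p := p) (R := k)))^[n]
            (WittVector.frobenius (WittVector.teichmuller p t) - WittVector.teichmuller p t) :=
        iterate_map_add (WittVector.verschiebung : WittVector p k →+ WittVector p k) n _ _
      rw [hseq, map_add, hFV, hadd, hsub, ← he_eq, he]
      ring
    rw [key]
    rcases Nat.lt_or_ge i n with hin | hin
    · exact stmt7_iter_versch_coeff_lt n _ hin
    · have hin' : i = n := by omega
      subst hin'
      have h0 : ((WittVector.verschiebung (p := p))^[i]
          (e.shift i +
            (WittVector.frobenius (WittVector.teichmuller p t)
              - WittVector.teichmuller p t))).coeff (0 + i) =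
          (e.shift i +
            (WittVector.frobenius (WittVector.teichmuller p t)
              - WittVector.teichmuller p t)).coeff 0 :=
        WittVector.iterate_verschiebung_coeff _ i 0
      rw [zero_add] at h0
      rw [h0]
      have h1 : (e.shift i +
          (WittVector.frobenius (WittVector.teichmuller p t)
            - WittVector.teichmuller p t)).coeff 0 = c + (t ^ p - t) := by
        have := map_add (WittVector.constantCoeff (p := p) (R := k)) (e.shift i)
          (WittVector.frobenius (WittVector.teichmuller p t) - WittVector.teichmuller p t)
        have h2 := map_sub (WittVector.constantCoeff (p := p) (R := k))
          (WittVector.frobenius (WittVector.teichmuller p t)) (WittVector.teichmuller p t)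
        simp only [WittVector.constantCoeff_apply] at this h2
        rw [this, h2, WittVector.coeff_frobenius_charP, WittVector.teichmuller_coeff_zero]
      rw [h1]
      linear_combination ht

lemma stmt7_seq_stable (k : Type*) [Field k] [IsAlgClosed k] [CharP k p] (y : WittVector p k)
    {i n m : ℕ} (hi : i < n) (hnm : n ≤ m) :
    (stmt7Seq p k y m).coeff i = (stmt7Seq p k y n).coeff i := by
  induction m with
  | zero => omega
  | succ m ihm =>
    rcases Nat.lt_or_ge m n with h | h
    · have : n = m + 1 := by omega
      subst this; rfl
    · have hstep : (stmt7Seq p k y (m + 1)).coeff i = (stmt7Seq p k y m).coeff i :=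
        stmt7_add_iter_versch_coeff _ _ m i (by omega)
      rw [hstep, ihm h]

end Stmt7Aux

/-- Let `p` be prime and `k` an algebraically closed field of characteristic
`p`. Then `x ↦ F(x) − x` is surjective on the ring `W(k)` of `p`-typical Witt vectors, where
`F` is the Witt vector Frobenius. -/
theorem stmt7 (p : ℕ) [Fact p.Prime] (k : Type*) [Field k] [IsAlgClosed k] [CharP k p] :
    Function.Surjective (fun x : WittVector p k => WittVector.frobenius x - x) := by
  intro y
  set a := stmt7Seq p k y with ha
  refine ⟨WittVector.mk p (fun i => (a (i + 1)).coeff i), ?_⟩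
  set x := WittVector.mk p (fun i => (a (i + 1)).coeff i) with hx
  ext n
  show (WittVector.frobenius x - x).coeff n = y.coeff n
  -- `init (n+1) x = init (n+1) (a (n+1))`
  have hinit : WittVector.init (n + 1) x = WittVector.init (n + 1) (a (n + 1)) := by
    ext j
    rw [stmt7_init_coeff, stmt7_init_coeff]
    split_ifs with hj
    · show (a (j + 1)).coeff j = (a (n + 1)).coeff j
      exact (stmt7_seq_stable k y (Nat.lt_succ_self j) (by omega)).symm
    · rfl
  have hgi := stmt7_g_init_congr (p := p) hinit
  -- the invariant at `n+1` gives `init (n+1) (F a' - a') = init (n+1) y`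
  set a' := a (n + 1) with ha'
  have hinv : ∀ i < n + 1, (WittVector.frobenius a' - a' - y).coeff i = 0 :=
    stmt7_invariant k y (n + 1)
  have hz : WittVector.init (n + 1) (WittVector.frobenius a' - a' - y) = 0 := by
    ext j
    rw [stmt7_init_coeff]
    split_ifs with hj
    · simp [hinv j hj]
    · simp
  have hy : WittVector.init (n + 1) (WittVector.frobenius a' - a') =
      WittVector.init (n + 1) y := by
    have hdecomp : WittVector.frobenius a' - a' =
        (WittVector.frobenius a' - a' - y) + y := by ring
    rw [hdecomp, WittVector.init_add, hz, zero_add, WittVector.init_init]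
  have hfinal : WittVector.init (n + 1) (WittVector.frobenius x - x) =
      WittVector.init (n + 1) y := by rw [hgi, hy]
  have h2 := congrArg (fun z : WittVector p k => z.coeff n) hfinal
  simpa [stmt7_init_coeff, Nat.lt_succ_self n] using h2
end

section
/- Let G be a compact topological group and let V be a finite-dimensional ℚ_p-vector space equipped with a continuous linear action of G (i.e., a homomorphism ρ from G to the group of linear automorphisms of V such that (g, v) ↦ ρ(g)(v) is continuous). Then there exists a G-stable ℤ_p-lattice in V: a finitely generated ℤ_p-submodule T of V which spans V over ℚ_p and satisfies ρ(g)(T) = T for every g ∈ G. -/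
/-! The `ℤ_[p]`-span `L` of a `ℚ_[p]`-basis of `V` is an open lattice, and so is each translate
`ρ g L`. By continuity, every `g` has a neighbourhood of elements `h` with `ρ h L ≤ ρ g L`,
so by compactness finitely many translates `ρ gᵢ L` contain all the others. The sum `T` of all
translates is then `G`-stable, contains `L`, and lies in the finitely generated `∑ ρ gᵢ L`;
as `ℤ_[p]` is noetherian, `T` is finitely generated. -/

open Set Submodule Topology

namespace Submodule

variable {R M G : Type*} [CommRing R] [AddCommGroup M] [Module R M] [Group G]
  (σ : G →* (M ≃ₗ[R] M))

theorem map_iSup_map_eq (L : Submodule R M) (h : G) :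
    (⨆ g, L.map (σ g).toLinearMap).map (σ h).toLinearMap = ⨆ g, L.map (σ g).toLinearMap := by
  rw [map_iSup]
  simp_rw [← map_comp]
  exact (Equiv.mulLeft h).iSup_congr fun g => by congr 1; ext; simp

variable {σ} [TopologicalSpace G] [TopologicalSpace M]

theorem isOpen_setOf_map_le (hσ : ∀ v, Continuous fun g => σ g v) {L N : Submodule R M}
    (hL : L.FG) (hN : IsOpen (N : Set M)) : IsOpen {g | L.map (σ g).toLinearMap ≤ N} := by
  obtain ⟨s, rfl⟩ := hL
  simp_rw [map_span_le, ← SetLike.mem_coe, ofPred_forall]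
  exact isOpen_biInter_finset fun v _ => hN.preimage (hσ v)

theorem isOpen_map_of_isOpen (hσ : Continuous fun gv : G × M => σ gv.1 gv.2) {L : Submodule R M}
    (hL : IsOpen (L : Set M)) (g : G) : IsOpen (L.map (σ g).toLinearMap : Set M) := by
  have hsymm : ⇑(σ g).symm = σ g⁻¹ := by rw [map_inv]; rfl
  rw [map_equiv_eq_comap_symm, comap_coe, LinearEquiv.coe_coe, hsymm]
  exact hL.preimage (hσ.comp (Continuous.prodMk_right _))

theorem exists_fg_le_forall_map_eq [IsNoetherianRing R] [CompactSpace G]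
    (hσ : Continuous fun gv : G × M => σ gv.1 gv.2) {L : Submodule R M} (hL : L.FG)
    (hLo : IsOpen (L : Set M)) :
    ∃ T : Submodule R M, L ≤ T ∧ T.FG ∧ ∀ g, T.map (σ g).toLinearMap = T := by
  set S : G → Submodule R M := fun g => L.map (σ g).toLinearMap
  have hS_fg (g : G) : (S g).FG := hL.map _
  have hS_nhds (g : G) : {h | S h ≤ S g} ∈ 𝓝 g :=
    (isOpen_setOf_map_le (fun v => hσ.comp (.prodMk_left v)) hL
      (isOpen_map_of_isOpen hσ hLo g)).mem_nhds (le_refl (S g))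
  obtain ⟨t, ht⟩ := CompactSpace.elim_nhds_subcover _ hS_nhds
  have hle : ⨆ g, S g ≤ ⨆ g ∈ t, S g := iSup_le fun h => by
    obtain ⟨g, hg, hhg⟩ := mem_iUnion₂.1 (ht.ge (mem_univ h))
    exact hhg.trans (le_biSup S hg)
  refine ⟨⨆ g, S g, ?_, (fg_biSup t S fun g _ => hS_fg g).of_le hle, map_iSup_map_eq σ L⟩
  calc L = S 1 := by simp [S]
    _ ≤ ⨆ g, S g := le_iSup S 1

end Submodule

namespace LinearEquiv

variable (R : Type*) {S M : Type*} [CommSemiring R] [Semiring S] [AddCommMonoid M] [Module R M]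
  [Module S M] [LinearMap.CompatibleSMul M M R S]

def restrictScalarsHom : (M ≃ₗ[S] M) →* (M ≃ₗ[R] M) where
  toFun e := e.restrictScalars R
  map_one' := rfl
  map_mul' _ _ := rfl

end LinearEquiv

theorem Module.Basis.isOpen_span_padicInt {p : ℕ} [Fact p.Prime] {ι V : Type*} [Finite ι]
    [AddCommGroup V] [Module ℚ_[p] V] [FiniteDimensional ℚ_[p] V]
    [Module ℤ_[p] V] [IsScalarTower ℤ_[p] ℚ_[p] V]
    [TopologicalSpace V] [IsTopologicalAddGroup V] [ContinuousSMul ℚ_[p] V] [T2Space V]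
    (b : Basis ι ℚ_[p] V) : IsOpen (span ℤ_[p] (range b) : Set V) := by
  have h : (span ℤ_[p] (range b) : Set V) =
      ⋂ i, b.coord i ⁻¹' range (algebraMap ℤ_[p] ℚ_[p]) := by
    ext v
    simp [b.mem_span_iff_repr_mem ℤ_[p]]
  rw [h]
  exact isOpen_iInter_of_finite fun i => PadicInt.isOpenEmbedding_coe.isOpen_range.preimage
    (LinearMap.continuous_of_finiteDimensional _)

theorem stmt10_general (p : ℕ) [Fact p.Prime] (G : Type*) [Group G] [TopologicalSpace G]
    [CompactSpace G]
    (V : Type*) [AddCommGroup V] [Module ℚ_[p] V] [FiniteDimensional ℚ_[p] V]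
    [Module ℤ_[p] V] [IsScalarTower ℤ_[p] ℚ_[p] V]
    [TopologicalSpace V] [IsTopologicalAddGroup V] [ContinuousSMul ℚ_[p] V] [T2Space V]
    (ρ : G →* (V ≃ₗ[ℚ_[p]] V))
    (hρ : Continuous fun gv : G × V => ρ gv.1 gv.2) :
    ∃ T : Submodule ℤ_[p] V, T.FG ∧ Submodule.span ℚ_[p] (T : Set V) = ⊤ ∧
      ∀ g : G, (fun v => ρ g v) '' (T : Set V) = (T : Set V) := by
  let b := Module.finBasis ℚ_[p] V
  obtain ⟨T, hLT, hT_fg, hT_stable⟩ :=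
    exists_fg_le_forall_map_eq (σ := (LinearEquiv.restrictScalarsHom ℤ_[p]).comp ρ) hρ
      (fg_span (finite_range b)) b.isOpen_span_padicInt
  refine ⟨T, hT_fg, ?_, fun g => ?_⟩
  · rw [eq_top_iff, ← b.span_eq, ← span_span_of_tower ℤ_[p]]
    exact span_mono hLT
  · exact (map_coe _ T).symm.trans (congrArg SetLike.coe (hT_stable g))

/-- Let `G` be a compact topological group and `V` a finite-dimensional
`ℚ_p`-vector space (with its natural topology: Hausdorff topological vector space topology)
equipped with a continuous linear action `ρ` of `G`. Then there exists a `G`-stable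
`ℤ_p`-lattice in `V`: a finitely generated `ℤ_p`-submodule `T` of `V` spanning `V` over `ℚ_p`
with `ρ(g)(T) = T` for all `g ∈ G`. -/
theorem stmt10 (p : ℕ) [Fact p.Prime] (G : Type*) [Group G] [TopologicalSpace G]
    [IsTopologicalGroup G] [CompactSpace G]
    (V : Type*) [AddCommGroup V] [Module ℚ_[p] V] [FiniteDimensional ℚ_[p] V]
    [Module ℤ_[p] V] [IsScalarTower ℤ_[p] ℚ_[p] V]
    [TopologicalSpace V] [IsTopologicalAddGroup V] [ContinuousSMul ℚ_[p] V] [T2Space V]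
    (ρ : G →* (V ≃ₗ[ℚ_[p]] V))
    (hρ : Continuous fun gv : G × V => ρ gv.1 gv.2) :
    ∃ T : Submodule ℤ_[p] V, T.FG ∧ Submodule.span ℚ_[p] (T : Set V) = ⊤ ∧
      ∀ g : G, (fun v => ρ g v) '' (T : Set V) = (T : Set V) :=
  stmt10_general p G V ρ hρ
end
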